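/- Let $n\ge 2$ and $1\le k\le n$ be integers, $h\in\mathbb{R}$, $c>0$, and let $g:(a_1,a_2)\to\mathbb{R}$ be positive, differentiable with $g'(t)\ne 0$ and $(g'(t))^2 = c + g(t)^2 - g(t)^2\,(h+g(t)^{-n})^2$ for all $t$. Set $\lambda = h+g^{-n}$, $r = g/\sqrt{c}$, fix $t_0\in(a_1,a_2)$ and let $\theta(t)=\int_{t_0}^t \frac{r(\tau)\lambda(\tau)}{r(\tau)^2+1}\,d\tau$. Let $B_2(s)\in\mathbb{R}^{n+2}$ have $\cosh s$ in coordinate $k$, $\sinh s$ in coordinate $k+1$ and $0$ elsewhere, and $B_3(s)$ have $\sinh s$ in coordinate $k$, $\cosh s$ in coordinate $k+1$ and $0$ elsewhere. Then $(r')^2 + r^2\lambda^2 = r^2 + 1$ on $(a_1,a_2)$, and for every $y\in\mathbb{R}^{n+2}$ with $y_k=y_{k+1}=0$ and $\langle y,y\rangle = 1$, the curves $\phi(u) = r(u)\,y + \sqrt{r(u)^2+1}\,B_2(\theta(u))$ and $\nu(u) = -r(u)\lambda(u)\,y - \frac{r(u)^2\lambda(u)}{\sqrt{r(u)^2+1}}\,B_2(\theta(u))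 + \frac{r'(u)}{\sqrt{r(u)^2+1}}\,B_3(\theta(u))$ satisfy: $\langle\phi,\phi\rangle\equiv -1$, $\langle\phi',\phi'\rangle\equiv 1$, $\langle\nu,\nu\rangle\equiv 1$, $\langle\nu,\phi'\rangle\equiv 0$, $\langle\nu(u),v\rangle = 0$ for every $v\in\mathbb{R}^{n+2}$ with $v_k=v_{k+1}=0$ and $\langle v,y\rangle = 0$, and $\nu'(u) = -(nh-(n-1)\lambda(u))\,\phi'(u)$ for all $u$. -/

import Mathlib

/-!
In the frame `y, B₂(θ), B₃(θ)`, orthonormal with norms `1, -1, 1` and with `B₂' = B₃`,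
`B₃' = B₂`, both curves have explicit coefficients, so every claim becomes an identity between
scalars. These follow from three facts: the ODE for `g` divided by `c` is
`r'² + r²λ² = r² + 1`; `rλ' = -n(λ - h)r'`; and `θ' = rλ/(r² + 1)`.
The one analytic point is that `r` is twice differentiable: by Darboux `r'` has constant sign,
so locally `r' = ±√(r² + 1 - r²λ²)`, which gives `r'' = r(1 - λ² + nλ(λ - h))`.
-/

open Real Filter Topology Set

/-- The semi-riemannian bilinear form of index `k` on `ℝ^m`:
`⟨v,w⟩ = -v₁w₁ - ⋯ - v_k w_k + v_{k+1} w_{k+1} + ⋯ + v_m w_m`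
(coordinates are 0-indexed in Lean, so the first `k` indices carry sign `-1`). -/
noncomputable def semiForm (k : ℕ) {m : ℕ} (v w : Fin m → ℝ) : ℝ :=
  ∑ i : Fin m, (if (i : ℕ) < k then (-1 : ℝ) else 1) * v i * w i

section semiForm

variable {k m : ℕ}

lemma semiForm_comm (v w : Fin m → ℝ) : semiForm k v w = semiForm k w v :=
  Finset.sum_congr rfl fun _ _ => by ring

lemma semiForm_add_left (v v' w : Fin m → ℝ) :
    semiForm k (v + v') w = semiForm k v w + semiForm k v' w := by
  simp only [semiForm, ← Finset.sum_add_distrib, Pi.add_apply]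
  exact Finset.sum_congr rfl fun _ _ => by ring

lemma semiForm_smul_left (a : ℝ) (v w : Fin m → ℝ) :
    semiForm k (a • v) w = a * semiForm k v w := by
  simp only [semiForm, Finset.mul_sum, Pi.smul_apply, smul_eq_mul]
  exact Finset.sum_congr rfl fun _ _ => by ring

lemma semiForm_add_right (v w w' : Fin m → ℝ) :
    semiForm k v (w + w') = semiForm k v w + semiForm k v w' := by
  rw [semiForm_comm, semiForm_add_left, semiForm_comm w, semiForm_comm w']

lemma semiForm_smul_right (a : ℝ) (v w : Fin m → ℝ) :
    semiForm k v (a • w) = a * semiForm k v w := by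
  rw [semiForm_comm, semiForm_smul_left, semiForm_comm w]

lemma semiForm_single_left (i : Fin m) (x : ℝ) (w : Fin m → ℝ) :
    semiForm k (Pi.single i x) w = (if (i : ℕ) < k then -1 else 1) * x * w i := by
  rw [semiForm, Finset.sum_eq_single i (fun l _ hl => by simp [hl]) (by simp)]
  simp

end semiForm

section boost

variable {m : ℕ}

noncomputable def boost (i j : Fin m) (s : ℝ) : Fin m → ℝ :=
  cosh s • Pi.single i 1 + sinh s • Pi.single j 1

lemma boost_apply {i j : Fin m} (hij : i ≠ j) (s : ℝ) (l : Fin m) :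
    boost i j s l = if l = i then cosh s else if l = j then sinh s else 0 := by
  split_ifs <;> simp [boost, *]

lemma boost_apply_left {i j : Fin m} (hij : i ≠ j) (s : ℝ) : boost i j s i = cosh s := by
  simp [boost_apply hij]

lemma boost_apply_right {i j : Fin m} (hij : i ≠ j) (s : ℝ) : boost i j s j = sinh s := by
  simp [boost_apply hij, hij.symm]

lemma hasDerivAt_boost (i j : Fin m) (s : ℝ) : HasDerivAt (boost i j) (boost j i s) s := by
  have := ((hasDerivAt_cosh s).smul_const (Pi.single i 1 : Fin m → ℝ)).add
    ((hasDerivAt_sinh s).smul_const (Pi.single j 1 : Fin m → ℝ))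
  rw [boost, add_comm]
  exact this

lemma HasDerivAt.smul_boost {b θ : ℝ → ℝ} {b' θ' u : ℝ} (i j : Fin m) (hb : HasDerivAt b b' u)
    (hθ : HasDerivAt θ θ' u) :
    HasDerivAt (fun t => b t • boost i j (θ t))
      (b' • boost i j (θ u) + (b u * θ') • boost j i (θ u)) u := by
  refine (hb.smul ((hasDerivAt_boost i j (θ u)).scomp u hθ)).congr_deriv ?_
  simp only [Function.comp_apply]
  module

variable {k : ℕ} {i j : Fin m}

lemma semiForm_boost_left (s : ℝ) (w : Fin m → ℝ) :
    semiForm k (boost i j s) w =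
      (if (i : ℕ) < k then -1 else 1) * cosh s * w i
        + (if (j : ℕ) < k then -1 else 1) * sinh s * w j := by
  rw [boost, semiForm_add_left, semiForm_smul_left, semiForm_smul_left, semiForm_single_left,
    semiForm_single_left]
  ring

lemma semiForm_boost_eq_zero {w : Fin m → ℝ} (hwi : w i = 0) (hwj : w j = 0) (s : ℝ) :
    semiForm k (boost i j s) w = 0 := by
  simp [semiForm_boost_left, hwi, hwj]

lemma semiForm_frame_left {y v : Fin m → ℝ} (hvi : v i = 0) (hvj : v j = 0) (a b c s : ℝ) :
    semiForm k (a • y + b • boost i j s + c • boost j i s) v = a * semiForm k y v := by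
  simp only [semiForm_add_left, semiForm_smul_left, semiForm_boost_eq_zero hvi hvj,
    semiForm_boost_eq_zero hvj hvi]
  ring

variable (hij : i ≠ j) (hi : (i : ℕ) < k) (hj : ¬ (j : ℕ) < k)
include hij hi hj

lemma semiForm_boost_self (s : ℝ) : semiForm k (boost i j s) (boost i j s) = -1 := by
  simp only [semiForm_boost_left, boost_apply_left hij, boost_apply_right hij, if_pos hi, if_neg hj]
  linear_combination -cosh_sq_sub_sinh_sq s

lemma semiForm_boost_swap_self (s : ℝ) : semiForm k (boost j i s) (boost j i s) = 1 := by
  simp only [semiForm_boost_left, boost_apply_left hij.symm, boost_apply_right hij.symm,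
    if_pos hi, if_neg hj]
  linear_combination cosh_sq_sub_sinh_sq s

lemma semiForm_boost_boost_swap (s : ℝ) : semiForm k (boost i j s) (boost j i s) = 0 := by
  simp only [semiForm_boost_left, boost_apply_left hij.symm, boost_apply_right hij.symm,
    if_pos hi, if_neg hj]
  ring

lemma semiForm_frame {y : Fin m → ℝ} (hyi : y i = 0) (hyj : y j = 0) (hyy : semiForm k y y = 1)
    (a b c a' b' c' s : ℝ) :
    semiForm k (a • y + b • boost i j s + c • boost j i s)
      (a' • y + b' • boost i j s + c' • boost j i s) = a * a' - b * b' + c * c' := by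
  have hyp : semiForm k y (boost i j s) = 0 := by
    rw [semiForm_comm, semiForm_boost_eq_zero hyi hyj]
  have hyq : semiForm k y (boost j i s) = 0 := by
    rw [semiForm_comm, semiForm_boost_eq_zero hyj hyi]
  have hqp : semiForm k (boost j i s) (boost i j s) = 0 := by
    rw [semiForm_comm, semiForm_boost_boost_swap hij hi hj]
  simp only [semiForm_add_left, semiForm_add_right, semiForm_smul_left, semiForm_smul_right,
    hyy, hyp, hyq, hqp, semiForm_boost_eq_zero hyi hyj,
    semiForm_boost_eq_zero hyj hyi, semiForm_boost_self hij hi hj,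
    semiForm_boost_swap_self hij hi hj, semiForm_boost_boost_swap hij hi hj]
  ring

end boost

section calculus

lemma HasDerivAt.of_sq_eq_of_eventually_pos {f F : ℝ → ℝ} {F' u : ℝ}
    (hf : ∀ᶠ t in 𝓝 u, 0 < f t) (hsq : ∀ᶠ t in 𝓝 u, f t ^ 2 = F t) (hF : HasDerivAt F F' u) :
    HasDerivAt f (F' / (2 * f u)) u := by
  have hfF : (fun t => √(F t)) =ᶠ[𝓝 u] f := by
    filter_upwards [hf, hsq] with t hpos hsq
    rw [← hsq, sqrt_sq hpos.le]
  have hFu : F u ≠ 0 := by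
    rw [← hsq.self_of_nhds]
    exact (pow_pos hf.self_of_nhds 2).ne'
  have := (hF.sqrt hFu).congr_of_eventuallyEq hfF.symm
  rwa [hfF.eq_of_nhds] at this

lemma HasDerivAt.of_sq_eq {f F : ℝ → ℝ} {F' u : ℝ}
    (hf : (∀ᶠ t in 𝓝 u, 0 < f t) ∨ ∀ᶠ t in 𝓝 u, f t < 0) (hsq : ∀ᶠ t in 𝓝 u, f t ^ 2 = F t)
    (hF : HasDerivAt F F' u) :
    HasDerivAt f (F' / (2 * f u)) u := by
  rcases hf with hpos | hneg
  · exact of_sq_eq_of_eventually_pos hpos hsq hF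
  · have := (of_sq_eq_of_eventually_pos (f := -f) (hneg.mono fun t ht => neg_pos.2 ht)
      (hsq.mono fun t ht => by rw [Pi.neg_apply, neg_sq, ht]) hF).neg
    rw [neg_neg] at this
    refine this.congr_deriv ?_
    rw [Pi.neg_apply]
    ring

lemma eventually_deriv_pos_or_neg {f : ℝ → ℝ} {s : Set ℝ} (hs : IsOpen s) (hs' : Convex ℝ s)
    (hf : ∀ x ∈ s, DifferentiableAt ℝ f x) (hf' : ∀ x ∈ s, deriv f x ≠ 0) {u : ℝ} (hu : u ∈ s) :
    (∀ᶠ t in 𝓝 u, 0 < deriv f t) ∨ ∀ᶠ t in 𝓝 u, deriv f t < 0 := by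
  rcases hasDerivWithinAt_forall_lt_or_forall_gt_of_forall_ne hs'
      (fun x hx => (hf x hx).hasDerivAt.hasDerivWithinAt) hf' with hneg | hpos
  · exact Or.inr (eventually_of_mem (hs.mem_nhds hu) hneg)
  · exact Or.inl (eventually_of_mem (hs.mem_nhds hu) hpos)

lemma hasDerivAt_intervalIntegral_of_continuousOn {f : ℝ → ℝ} {s : Set ℝ} (hs : IsOpen s)
    (hs' : s.OrdConnected) (hf : ContinuousOn f s) {a u : ℝ} (ha : a ∈ s) (hu : u ∈ s) :
    HasDerivAt (fun t => ∫ τ in a..t, f τ) (f u) u :=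
  intervalIntegral.integral_hasDerivAt_right
    ((hf.mono (hs'.uIcc_subset ha hu)).intervalIntegrable)
    (hf.stronglyMeasurableAtFilter hs u hu) (hf.continuousAt (hs.mem_nhds hu))

end calculus

section curve

variable {m : ℕ} {r lam θ : ℝ → ℝ} {u : ℝ}

lemma HasDerivAt.sqrt_sq_add_one {r' : ℝ} (hr : HasDerivAt r r' u) :
    HasDerivAt (fun t => √(r t ^ 2 + 1)) (r u * r' / √(r u ^ 2 + 1)) u := by
  refine (((hr.fun_pow 2).add_const 1).sqrt (by positivity)).congr_deriv ?_
  field_simp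
  ring

lemma hasDerivAt_phi (i j : Fin m) (y : Fin m → ℝ) (hr : HasDerivAt r (deriv r u) u)
    (hθ : HasDerivAt θ (r u * lam u / (r u ^ 2 + 1)) u) :
    HasDerivAt (fun t => r t • y + √(r t ^ 2 + 1) • boost i j (θ t))
      (deriv r u • y + (r u * deriv r u / √(r u ^ 2 + 1)) • boost i j (θ u)
        + (r u * lam u / √(r u ^ 2 + 1)) • boost j i (θ u)) u := by
  refine ((hr.smul_const y).add (hr.sqrt_sq_add_one.smul_boost i j hθ)).congr_deriv ?_
  have hS2 := sq_sqrt (show 0 ≤ r u ^ 2 + 1 by positivity)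
  have hcoeff : √(r u ^ 2 + 1) * (r u * lam u / (r u ^ 2 + 1)) = r u * lam u / √(r u ^ 2 + 1) := by
    field_simp
    rw [hS2]
  rw [hcoeff, add_assoc]

lemma hasDerivAt_nu {n h : ℝ} (i j : Fin m) (y : Fin m → ℝ) (hr : HasDerivAt r (deriv r u) u)
    (hr' : HasDerivAt (deriv r) (r u * (1 - lam u ^ 2 + n * lam u * (lam u - h))) u)
    (hlam : HasDerivAt lam (-n * (lam u - h) * deriv r u / r u) u)
    (hθ : HasDerivAt θ (r u * lam u / (r u ^ 2 + 1)) u)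
    (hE : deriv r u ^ 2 + r u ^ 2 * lam u ^ 2 = r u ^ 2 + 1) (hr0 : r u ≠ 0) :
    HasDerivAt (fun t => (-(r t * lam t)) • y
        - (r t ^ 2 * lam t / √(r t ^ 2 + 1)) • boost i j (θ t)
        + (deriv r t / √(r t ^ 2 + 1)) • boost j i (θ t))
      ((-(n * h - (n - 1) * lam u)) • (deriv r u • y
        + (r u * deriv r u / √(r u ^ 2 + 1)) • boost i j (θ u)
        + (r u * lam u / √(r u ^ 2 + 1)) • boost j i (θ u))) u := by
  have hS := hr.sqrt_sq_add_one
  have hS0 : √(r u ^ 2 + 1) ≠ 0 := by positivity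
  have hS2 := sq_sqrt (show 0 ≤ r u ^ 2 + 1 by positivity)
  refine ((((hr.fun_mul hlam).neg.smul_const y).sub
    ((((hr.fun_pow 2).fun_mul hlam).fun_div hS hS0).smul_boost i j hθ)).add
    ((hr'.fun_div hS hS0).smul_boost j i hθ)).congr_deriv ?_
  set S := √(r u ^ 2 + 1)
  set R := r u
  set D := deriv r u
  set L := lam u
  rw [← hS2] at hE ⊢
  have hy_coeff : -(D * L + R * (-n * (L - h) * D / R)) = -(n * h - (n - 1) * L) * D := by
    field_simp
    ring
  have hp_coeff : -(((2 * R * D * L + R ^ 2 * (-n * (L - h) * D / R)) * S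
      - R ^ 2 * L * (R * D / S)) / S ^ 2) + D / S * (R * L / S ^ 2)
      = -(n * h - (n - 1) * L) * (R * D / S) := by
    field_simp
    linear_combination -(D * L) * hS2
  have hq_coeff : -(R ^ 2 * L / S * (R * L / S ^ 2))
      + (R * (1 - L ^ 2 + n * L * (L - h)) * S - D * (R * D / S)) / S ^ 2
      = -(n * h - (n - 1) * L) * (R * L / S) := by
    field_simp
    linear_combination -hE
  linear_combination (norm := module)
    hy_coeff • y + hp_coeff • boost i j (θ u) + hq_coeff • boost j i (θ u)

end curve

section profile

lemma hasDerivAt_deriv_of_sq_add_sq_mul_sq {r lam : ℝ → ℝ} {n h u : ℝ}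
    (hsign : (∀ᶠ t in 𝓝 u, 0 < deriv r t) ∨ ∀ᶠ t in 𝓝 u, deriv r t < 0)
    (hE : ∀ᶠ t in 𝓝 u, deriv r t ^ 2 + r t ^ 2 * lam t ^ 2 = r t ^ 2 + 1)
    (hr : HasDerivAt r (deriv r u) u)
    (hlam : HasDerivAt lam (-n * (lam u - h) * deriv r u / r u) u) :
    HasDerivAt (deriv r) (r u * (1 - lam u ^ 2 + n * lam u * (lam u - h))) u := by
  have hD0 : deriv r u ≠ 0 := by
    rcases hsign with hpos | hneg
    exacts [hpos.self_of_nhds.ne', hneg.self_of_nhds.ne]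
  refine (HasDerivAt.of_sq_eq (F := fun t => r t ^ 2 + 1 - r t ^ 2 * lam t ^ 2) hsign
    (hE.mono fun t ht => by linear_combination ht)
    (((hr.fun_pow 2).add_const 1).sub ((hr.fun_pow 2).fun_mul (hlam.fun_pow 2)))).congr_deriv ?_
  field_simp
  ring

variable {g lam r : ℝ → ℝ} {c h : ℝ} {n : ℕ}

lemma deriv_eq_of_eq_div_sqrt (hr : ∀ t, r t = g t / √c) (t : ℝ) :
    deriv r t = deriv g t / √c := by
  rw [show r = fun t => g t / √c from funext hr, deriv_div_const]

lemma differentiableAt_of_eq_div_sqrt (hr : ∀ t, r t = g t / √c) {t : ℝ}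
    (hg : DifferentiableAt ℝ g t) : DifferentiableAt ℝ r t := by
  rw [show r = fun t => g t / √c from funext hr]
  exact hg.div_const _

lemma deriv_sq_add_sq_mul_sq_eq (hc : 0 < c) (hr : ∀ t, r t = g t / √c)
    (hlam : ∀ t, lam t = h + g t ^ (-(n : ℤ))) {t : ℝ}
    (hode : deriv g t ^ 2 = c + g t ^ 2 - g t ^ 2 * (h + g t ^ (-(n : ℤ))) ^ 2) :
    deriv r t ^ 2 + r t ^ 2 * lam t ^ 2 = r t ^ 2 + 1 := by
  have hc' : √c ^ 2 = c := sq_sqrt hc.le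
  rw [deriv_eq_of_eq_div_sqrt hr, hr, hlam]
  field_simp
  linear_combination hode - hc'

lemma hasDerivAt_of_eq_add_zpow (hc : 0 < c) (hr : ∀ t, r t = g t / √c)
    (hlam : ∀ t, lam t = h + g t ^ (-(n : ℤ))) {t : ℝ} (hg : DifferentiableAt ℝ g t)
    (hg0 : g t ≠ 0) : HasDerivAt lam (-n * (lam t - h) * deriv r t / r t) t := by
  rw [show lam = fun t => h + g t ^ (-(n : ℤ)) from funext hlam]
  refine ((hasDerivAt_zpow _ _ (Or.inl hg0)).comp t hg.hasDerivAt).const_add h |>.congr_deriv ?_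
  have hc0 : √c ≠ 0 := (sqrt_pos.2 hc).ne'
  rw [deriv_eq_of_eq_div_sqrt hr, hr, zpow_sub_one₀ hg0]
  field_simp
  push_cast
  ring

end profile

theorem semiForm_curve_identities {k m : ℕ} {i j : Fin m} (hij : i ≠ j) (hi : (i : ℕ) < k)
    (hj : ¬ (j : ℕ) < k) {r lam θ : ℝ → ℝ} {n h u : ℝ} (hr : HasDerivAt r (deriv r u) u)
    (hr' : HasDerivAt (deriv r) (r u * (1 - lam u ^ 2 + n * lam u * (lam u - h))) u)
    (hlam : HasDerivAt lam (-n * (lam u - h) * deriv r u / r u) u)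
    (hθ : HasDerivAt θ (r u * lam u / (r u ^ 2 + 1)) u)
    (hE : deriv r u ^ 2 + r u ^ 2 * lam u ^ 2 = r u ^ 2 + 1) (hr0 : r u ≠ 0)
    {y : Fin m → ℝ} (hyi : y i = 0) (hyj : y j = 0) (hyy : semiForm k y y = 1)
    {φ ν : ℝ → Fin m → ℝ} (hφ : ∀ t, φ t = r t • y + √(r t ^ 2 + 1) • boost i j (θ t))
    (hν : ∀ t, ν t = (-(r t * lam t)) • y
        - (r t ^ 2 * lam t / √(r t ^ 2 + 1)) • boost i j (θ t)
        + (deriv r t / √(r t ^ 2 + 1)) • boost j i (θ t)) :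
    semiForm k (φ u) (φ u) = -1 ∧
    semiForm k (deriv φ u) (deriv φ u) = 1 ∧
    semiForm k (ν u) (ν u) = 1 ∧
    semiForm k (ν u) (deriv φ u) = 0 ∧
    (∀ v : Fin m → ℝ, v i = 0 → v j = 0 → semiForm k v y = 0 → semiForm k (ν u) v = 0) ∧
    deriv ν u = (-(n * h - (n - 1) * lam u)) • deriv φ u := by
  have hφ' := hasDerivAt_phi i j y hr hθ
  have hν' := hasDerivAt_nu i j y hr hr' hlam hθ hE hr0
  rw [← funext hφ] at hφ'
  rw [← funext hν] at hν'
  set S := √(r u ^ 2 + 1)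
  have hS0 : S ≠ 0 := by positivity
  have hS2 : S ^ 2 = r u ^ 2 + 1 := sq_sqrt (by positivity)
  have hφu : φ u = r u • y + S • boost i j (θ u) + (0 : ℝ) • boost j i (θ u) := by
    rw [hφ, zero_smul, add_zero]
  have hνu : ν u = (-(r u * lam u)) • y + (-(r u ^ 2 * lam u / S)) • boost i j (θ u)
      + (deriv r u / S) • boost j i (θ u) := by
    rw [hν, sub_eq_add_neg, ← neg_smul]
  rw [hφ'.deriv, hν'.deriv, hφu, hνu]
  refine ⟨?_, ?_, ?_, ?_, fun v hvi hvj hvy => ?_, rfl⟩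
  · rw [semiForm_frame hij hi hj hyi hyj hyy]
    linear_combination -hS2
  · rw [semiForm_frame hij hi hj hyi hyj hyy]
    field_simp
    linear_combination (deriv r u ^ 2 - 1) * hS2 + hE
  · rw [semiForm_frame hij hi hj hyi hyj hyy]
    field_simp
    linear_combination (r u ^ 2 * lam u ^ 2 - 1) * hS2 + hE
  · rw [semiForm_frame hij hi hj hyi hyj hyy]
    field_simp
    linear_combination -(r u * lam u * deriv r u) * hS2
  · rw [semiForm_frame_left hvi hvj, semiForm_comm, hvy, mul_zero]

/-- Coordinates `k` and `k+1` of the paper (1-indexed) are indices `k-1` and `k` here. -/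
theorem stmt_7_general (n k : ℕ) (hk1 : 1 ≤ k) (hkn : k ≤ n)
    (h c a₁ a₂ t₀ : ℝ) (hc : 0 < c) (ht₀ : t₀ ∈ Set.Ioo a₁ a₂)
    (g lam r θ : ℝ → ℝ)
    (hgdiff : ∀ t ∈ Set.Ioo a₁ a₂, DifferentiableAt ℝ g t)
    (hgpos : ∀ t ∈ Set.Ioo a₁ a₂, 0 < g t)
    (hg' : ∀ t ∈ Set.Ioo a₁ a₂, deriv g t ≠ 0)
    (hode : ∀ t ∈ Set.Ioo a₁ a₂,
      deriv g t ^ 2 = c + g t ^ 2 - g t ^ 2 * (h + g t ^ (-(n : ℤ))) ^ 2)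
    (hlam : ∀ t, lam t = h + g t ^ (-(n : ℤ)))
    (hr : ∀ t, r t = g t / Real.sqrt c)
    (hθ : ∀ t, θ t = ∫ τ in t₀..t, r τ * lam τ / (r τ ^ 2 + 1))
    (B₂ B₃ : ℝ → Fin (n + 2) → ℝ)
    (hB₂ : ∀ s i, B₂ s i =
      if (i : ℕ) = k - 1 then Real.cosh s else if (i : ℕ) = k then Real.sinh s else 0)
    (hB₃ : ∀ s i, B₃ s i =
      if (i : ℕ) = k - 1 then Real.sinh s else if (i : ℕ) = k then Real.cosh s else 0) :
    (∀ t ∈ Set.Ioo a₁ a₂, deriv r t ^ 2 + r t ^ 2 * lam t ^ 2 = r t ^ 2 + 1) ∧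
    ∀ y : Fin (n + 2) → ℝ,
      (∀ i : Fin (n + 2), ((i : ℕ) = k - 1 ∨ (i : ℕ) = k) → y i = 0) →
      semiForm k y y = 1 →
      ∀ φ ν : ℝ → Fin (n + 2) → ℝ,
        (∀ u, φ u = r u • y + Real.sqrt (r u ^ 2 + 1) • B₂ (θ u)) →
        (∀ u, ν u = (-(r u * lam u)) • y
            - (r u ^ 2 * lam u / Real.sqrt (r u ^ 2 + 1)) • B₂ (θ u)
            + (deriv r u / Real.sqrt (r u ^ 2 + 1)) • B₃ (θ u)) →
        ∀ u ∈ Set.Ioo a₁ a₂,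
          semiForm k (φ u) (φ u) = -1 ∧
          semiForm k (deriv φ u) (deriv φ u) = 1 ∧
          semiForm k (ν u) (ν u) = 1 ∧
          semiForm k (ν u) (deriv φ u) = 0 ∧
          (∀ v : Fin (n + 2) → ℝ,
            (∀ i : Fin (n + 2), ((i : ℕ) = k - 1 ∨ (i : ℕ) = k) → v i = 0) →
            semiForm k v y = 0 → semiForm k (ν u) v = 0) ∧
          deriv ν u = (-((n : ℝ) * h - ((n : ℝ) - 1) * lam u)) • deriv φ u := by
  have hI : IsOpen (Ioo a₁ a₂) := isOpen_Ioo
  have hrd t (ht : t ∈ Ioo a₁ a₂) : DifferentiableAt ℝ r t :=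
    differentiableAt_of_eq_div_sqrt hr (hgdiff t ht)
  have hr' t (ht : t ∈ Ioo a₁ a₂) : deriv r t ≠ 0 := by
    rw [deriv_eq_of_eq_div_sqrt hr]
    exact div_ne_zero (hg' t ht) (sqrt_pos.2 hc).ne'
  have hlamd t (ht : t ∈ Ioo a₁ a₂) :=
    hasDerivAt_of_eq_add_zpow hc hr hlam (hgdiff t ht) (hgpos t ht).ne'
  have hE t (ht : t ∈ Ioo a₁ a₂) := deriv_sq_add_sq_mul_sq_eq hc hr hlam (hode t ht)
  refine ⟨hE, fun y hy hyy φ ν hφ hν u hu => ?_⟩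
  have hr0 : r u ≠ 0 := by
    rw [hr]
    exact (div_pos (hgpos u hu) (sqrt_pos.2 hc)).ne'
  have hr'' := hasDerivAt_deriv_of_sq_add_sq_mul_sq
    (eventually_deriv_pos_or_neg hI (convex_Ioo a₁ a₂) hrd hr' hu)
    (eventually_of_mem (hI.mem_nhds hu) hE) (hrd u hu).hasDerivAt (hlamd u hu)
  have hθ' : HasDerivAt θ (r u * lam u / (r u ^ 2 + 1)) u := by
    rw [show θ = _ from funext hθ]
    refine hasDerivAt_intervalIntegral_of_continuousOn hI ordConnected_Ioo (fun t ht => ?_) ht₀ hu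
    have hrc := (hrd t ht).continuousAt
    exact ((hrc.mul (hlamd t ht).continuousAt).div ((hrc.pow 2).add continuousAt_const)
      (by positivity : r t ^ 2 + 1 ≠ 0)).continuousWithinAt
  let i₁ : Fin (n + 2) := ⟨k - 1, by omega⟩
  let i₂ : Fin (n + 2) := ⟨k, by omega⟩
  have hij : i₁ ≠ i₂ := by simp [i₁, i₂, Fin.ext_iff]; omega
  obtain rfl : B₂ = boost i₁ i₂ := by
    funext s l
    rw [hB₂, boost_apply hij]
    simp [i₁, i₂, Fin.ext_iff]
  obtain rfl : B₃ = boost i₂ i₁ := by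
    funext s l
    rw [hB₃, boost_apply hij.symm]
    simp only [i₁, i₂, Fin.ext_iff]
    split_ifs <;> first | rfl | omega
  obtain ⟨hφφ, hφ'φ', hνν, hνφ', hνv, hν'⟩ := semiForm_curve_identities hij
    (by simp [i₁]; omega) (by simp [i₂]) (hrd u hu).hasDerivAt hr'' (hlamd u hu) hθ' (hE u hu)
    hr0 (hy i₁ (Or.inl rfl)) (hy i₂ (Or.inr rfl)) hyy hφ hν
  exact ⟨hφφ, hφ'φ', hνν, hνφ', fun v hv => hνv v (hv i₁ (Or.inl rfl)) (hv i₂ (Or.inr rfl)), hν'⟩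

/-- Theorem 2.16 of the paper (a family of cmc hypersurfaces of `ℍ_{k-1}^{n+1}`).
Coordinates `k` and `k+1` of the paper (1-indexed) are indices `k-1` and `k` here. -/
theorem stmt_7 (n k : ℕ) (hn : 2 ≤ n) (hk1 : 1 ≤ k) (hkn : k ≤ n)
    (h c a₁ a₂ t₀ : ℝ) (hc : 0 < c) (ht₀ : t₀ ∈ Set.Ioo a₁ a₂)
    (g lam r θ : ℝ → ℝ)
    (hgdiff : ∀ t ∈ Set.Ioo a₁ a₂, DifferentiableAt ℝ g t)
    (hgpos : ∀ t ∈ Set.Ioo a₁ a₂, 0 < g t)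
    (hg' : ∀ t ∈ Set.Ioo a₁ a₂, deriv g t ≠ 0)
    (hode : ∀ t ∈ Set.Ioo a₁ a₂,
      deriv g t ^ 2 = c + g t ^ 2 - g t ^ 2 * (h + g t ^ (-(n : ℤ))) ^ 2)
    (hlam : ∀ t, lam t = h + g t ^ (-(n : ℤ)))
    (hr : ∀ t, r t = g t / Real.sqrt c)
    (hθ : ∀ t, θ t = ∫ τ in t₀..t, r τ * lam τ / (r τ ^ 2 + 1))
    (B₂ B₃ : ℝ → Fin (n + 2) → ℝ)
    (hB₂ : ∀ s i, B₂ s i =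
      if (i : ℕ) = k - 1 then Real.cosh s else if (i : ℕ) = k then Real.sinh s else 0)
    (hB₃ : ∀ s i, B₃ s i =
      if (i : ℕ) = k - 1 then Real.sinh s else if (i : ℕ) = k then Real.cosh s else 0) :
    (∀ t ∈ Set.Ioo a₁ a₂, deriv r t ^ 2 + r t ^ 2 * lam t ^ 2 = r t ^ 2 + 1) ∧
    ∀ y : Fin (n + 2) → ℝ,
      (∀ i : Fin (n + 2), ((i : ℕ) = k - 1 ∨ (i : ℕ) = k) → y i = 0) →
      semiForm k y y = 1 →
      ∀ φ ν : ℝ → Fin (n + 2) → ℝ,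
        (∀ u, φ u = r u • y + Real.sqrt (r u ^ 2 + 1) • B₂ (θ u)) →
        (∀ u, ν u = (-(r u * lam u)) • y
            - (r u ^ 2 * lam u / Real.sqrt (r u ^ 2 + 1)) • B₂ (θ u)
            + (deriv r u / Real.sqrt (r u ^ 2 + 1)) • B₃ (θ u)) →
        ∀ u ∈ Set.Ioo a₁ a₂,
          semiForm k (φ u) (φ u) = -1 ∧
          semiForm k (deriv φ u) (deriv φ u) = 1 ∧
          semiForm k (ν u) (ν u) = 1 ∧
          semiForm k (ν u) (deriv φ u) = 0 ∧
          (∀ v : Fin (n + 2) → ℝ,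
            (∀ i : Fin (n + 2), ((i : ℕ) = k - 1 ∨ (i : ℕ) = k) → v i = 0) →
            semiForm k v y = 0 → semiForm k (ν u) v = 0) ∧
          deriv ν u = (-((n : ℝ) * h - ((n : ℝ) - 1) * lam u)) • deriv φ u :=
  stmt_7_general n k hk1 hkn h c a₁ a₂ t₀ hc ht₀ g lam r θ hgdiff hgpos hg' hode hlam hr hθ B₂ B₃
    hB₂ hB₃
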